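/- arXiv:2105.02099 — 3 statements merged into one kernel-verified Lean document; each statement's English description precedes it below -/
import Mathlib

section
/- In a decreasing CMDP, iterating the functional 𝓕 on the initial vector x_T reaches a fixed point after at most n steps, where n is the length of the longest simple path in the CMDP, and this fixed point equals the minimal-load vector for the sure non-reloading reachability objective 𝖱𝖾𝖺𝖼𝗁_T = ⋃_i 𝖱𝖾𝖺𝖼𝗁ᵀⁱ. -/
open Classical

/-- A consumption Markov decision process. -/
structure CMDP (S A : Type) [Fintype S] [Fintype A] where
  /-- transition function -/
  δ : S → A → S → NNReal
  δ_sum : ∀ s a, ∑ t, δ s a t = 1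
  /-- consumption function -/
  γ : S → A → ℕ
  /-- reload states -/
  R : Finset S
  /-- capacity -/
  cap : ℕ

namespace CMDP

variable {S A : Type} [Fintype S] [Fintype A] [DecidableEq S] [DecidableEq A]

/-- successors with positive transition probability -/
noncomputable def Succ (M : CMDP S A) (s : S) (a : A) : Finset S :=
  Finset.univ.filter (fun t => 0 < M.δ s a t)

/-- A (history-dependent) strategy: takes the initial load, the history
(list of state-action steps performed so far) and the current state. -/
def Strat (S A : Type) := ℕ → List (S × A) → S → A

/-- An infinite run: a sequence of states and actions. -/
structure Run (S A : Type) where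
  st : ℕ → S
  ac : ℕ → A

/-- the history (list of steps) formed by the first `i` steps of a run -/
def hist (ρ : Run S A) (i : ℕ) : List (S × A) :=
  (List.range i).map (fun j => (ρ.st j, ρ.ac j))

/-- a run is compatible with strategy `σ` under initial load `d` -/
def Compatible (M : CMDP S A) (σ : Strat S A) (d : ℕ) (ρ : Run S A) : Prop :=
  ∀ i, ρ.ac i = σ d (hist ρ i) (ρ.st i) ∧ 0 < M.δ (ρ.st i) (ρ.ac i) (ρ.st (i+1))

/-- one step of the resource-level evolution; `none` is ⊥ (exhaustion) -/
def nextLevel (M : CMDP S A) (s : S) (a : A) : Option ℕ → Option ℕ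
  | none => none
  | some l =>
      if s ∈ M.R then (if M.γ s a ≤ M.cap then some (M.cap - M.γ s a) else none)
      else (if M.γ s a ≤ l then some (l - M.γ s a) else none)

/-- resource levels along a path, starting from initial load `d` -/
def levels (M : CMDP S A) (d : ℕ) (st : ℕ → S) (ac : ℕ → A) : ℕ → Option ℕ
  | 0 => some d
  | i+1 => M.nextLevel (st i) (ac i) (levels M d st ac i)

/-- a run loaded with `d` is safe: ⊥ never occurs among the resource levels -/
def SafeRun (M : CMDP S A) (d : ℕ) (ρ : Run S A) : Prop :=
  ∀ i, levels M d ρ.st ρ.ac i ≠ none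

/-- all `σ`-compatible runs from `s` loaded with `d` are safe -/
def AllSafe (M : CMDP S A) (σ : Strat S A) (s : S) (d : ℕ) : Prop :=
  ∀ ρ : Run S A, Compatible M σ d ρ → ρ.st 0 = s → SafeRun M d ρ

/-- the resource level after a finite history -/
def levelOfHist (M : CMDP S A) (d : ℕ) (h : List (S × A)) : Option ℕ :=
  h.foldl (fun r p => M.nextLevel p.1 p.2 r) (some d)

/-- action value of `a` in `s` based on vector `v` -/
noncomputable def AV (M : CMDP S A) (v : S → ℕ∞) (s : S) (a : A) : ℕ∞ :=
  (M.γ s a : ℕ∞) + (M.Succ s a).sup v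

/-- the Bellman-style functional 𝓕 -/
noncomputable def Ffun (M : CMDP S A) (T : Finset S) (v : S → ℕ∞) : S → ℕ∞ :=
  fun s => if s ∈ T then 0 else Finset.univ.inf (fun a => M.AV v s a)

/-- the initial vector `x_T`: 0 on `T` and ∞ elsewhere -/
noncomputable def xT (T : Finset S) : S → ℕ∞ := fun s => if s ∈ T then 0 else ⊤

/-- truncation to zero on `T` -/
noncomputable def trunc0 (T : Finset S) (v : S → ℕ∞) : S → ℕ∞ :=
  fun s => if s ∈ T then 0 else v s

/-- the functional 𝓖 (for reachability in at least one step) -/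
noncomputable def Gfun (M : CMDP S A) (T : Finset S) (v : S → ℕ∞) : S → ℕ∞ :=
  fun s => Finset.univ.inf (fun a => M.AV (trunc0 T v) s a)

/-- bounded non-reloading reachability objective `Reach_T^i` -/
def NRReachB (M : CMDP S A) (T : Finset S) (i : ℕ) (d : ℕ) (ρ : Run S A) : Prop :=
  ∃ f ≤ i, ρ.st f ∈ T ∧ (∑ j ∈ Finset.range f, M.γ (ρ.st j) (ρ.ac j)) ≤ d

/-- non-reloading reachability objective -/
def NRReach (M : CMDP S A) (T : Finset S) (d : ℕ) (ρ : Run S A) : Prop :=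
  ∃ i, NRReachB M T i d ρ

/-- non-reloading reachability in at least one step -/
def NRReachPlus (M : CMDP S A) (T : Finset S) (d : ℕ) (ρ : Run S A) : Prop :=
  ∃ f, 1 ≤ f ∧ ρ.st f ∈ T ∧ (∑ j ∈ Finset.range f, M.γ (ρ.st j) (ρ.ac j)) ≤ d

/-- sure satisfaction of an objective from `s` loaded with `d` -/
def SureSat (M : CMDP S A) (σ : Strat S A) (s : S) (d : ℕ)
    (O : ℕ → Run S A → Prop) : Prop :=
  ∀ ρ, Compatible M σ d ρ → ρ.st 0 = s → O d ρ

/-- a vector of loads is sufficient for surely satisfying an objective -/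
def SatVec (M : CMDP S A) (O : ℕ → Run S A → Prop) (x : S → ℕ∞) : Prop :=
  ∃ σ : Strat S A, ∀ s (d : ℕ), x s = (d : ℕ∞) → SureSat M σ s d O

/-- `x` is the componentwise-minimal vector satisfying `Sat` -/
def IsML {S : Type} (Sat : (S → ℕ∞) → Prop) (x : S → ℕ∞) : Prop :=
  Sat x ∧ ∀ y, Sat y → x ≤ y

/-- a vector of loads is sufficient for safety -/
def SafetySat (M : CMDP S A) (x : S → ℕ∞) : Prop :=
  ∃ σ : Strat S A, ∀ s (d : ℕ), x s = (d : ℕ∞) → AllSafe M σ s d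

/-- a decreasing CMDP: every cycle contains a positive-consumption transition -/
def Decreasing (M : CMDP S A) : Prop :=
  ∀ (n : ℕ) (st : ℕ → S) (ac : ℕ → A), 0 < n →
    (∀ i < n, 0 < M.δ (st i) (ac i) (st (i+1))) → st 0 = st n →
    ∃ i < n, 0 < M.γ (st i) (ac i)

/-- a valid finite path of length `n` -/
def ValidPath (M : CMDP S A) (n : ℕ) (st : ℕ → S) (ac : ℕ → A) : Prop :=
  ∀ i < n, 0 < M.δ (st i) (ac i) (st (i+1))

/-- a simple path: no proper infix forms a cycle -/
def SimplePath (M : CMDP S A) (n : ℕ) (st : ℕ → S) (ac : ℕ → A) : Prop :=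
  ValidPath M n st ac ∧ ∀ i j, i < j → j ≤ n → st i = st j → i = 0 ∧ j = n

/-- probability, under strategy `σ` with load `d` and past history `h`, that the
next `n` steps (states s₁ … s_{n+1}) avoid `T`. -/
noncomputable def probAvoid (M : CMDP S A) (T : Finset S) (σ : Strat S A) (d : ℕ) :
    ℕ → List (S × A) → S → NNReal
  | 0, _, s => if s ∈ T then 0 else 1
  | n+1, h, s =>
      if s ∈ T then 0 else
      ∑ t, M.δ s (σ d h s) t * probAvoid M T σ d n (h ++ [(s, σ d h s)]) t

/-- probability, under strategy `σ` with load `d` and past history `h`, that the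
next `n` steps contain fewer than `k` visits to `T`. -/
noncomputable def probFew (M : CMDP S A) (T : Finset S) (σ : Strat S A) (d : ℕ) :
    ℕ → ℕ → List (S × A) → S → NNReal
  | 0, k, _, s => if k ≤ (if s ∈ T then 1 else 0) then 0 else 1
  | n+1, k, h, s =>
      if k ≤ (if s ∈ T then 1 else 0) then 0 else
      ∑ t, M.δ s (σ d h s) t *
        probFew M T σ d n (k - (if s ∈ T then 1 else 0)) (h ++ [(s, σ d h s)]) t

/-- hope value of successor `s'` for `a` in `s`, based on `x` and safety vector `mlS` -/
noncomputable def HV (M : CMDP S A) (mlS : S → ℕ∞) (x : S → ℕ∞)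
    (s : S) (a : A) (s' : S) : ℕ∞ :=
  max (x s') (((M.Succ s a).erase s').sup mlS)

/-- safe value of `a` in `s` based on `x` and safety vector `mlS` -/
noncomputable def SV (M : CMDP S A) (mlS : S → ℕ∞) (x : S → ℕ∞) (s : S) (a : A) : ℕ∞ :=
  (M.γ s a : ℕ∞) + (M.Succ s a).inf (fun s' => HV M mlS x s a s')

/-- thresholded safe value: only successors with probability at least `θ` count -/
noncomputable def SVθ (M : CMDP S A) (mlS : S → ℕ∞) (θ : NNReal) (x : S → ℕ∞)
    (s : S) (a : A) : ℕ∞ :=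
  (M.γ s a : ℕ∞) +
    ((M.Succ s a).filter (fun s' => θ ≤ M.δ s a s')).inf (fun s' => HV M mlS x s a s')

/-- the truncation operator ⌈·⌉_{R'}^{cap} -/
noncomputable def truncRset (M : CMDP S A) (R' : Finset S) (x : S → ℕ∞) : S → ℕ∞ :=
  fun s => if (M.cap : ℕ∞) < x s then ⊤ else if s ∈ R' then 0 else x s

/-- the functional 𝓐 -/
noncomputable def Afun (M : CMDP S A) (T : Finset S) (mlS : S → ℕ∞)
    (x : S → ℕ∞) : S → ℕ∞ :=
  fun s => if s ∈ T then mlS s else Finset.univ.inf (fun a => SV M mlS x s a)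

/-- the operator 𝓑 = ⌈𝓐(·)⌉_R^cap -/
noncomputable def Bfun (M : CMDP S A) (T : Finset S) (mlS : S → ℕ∞)
    (x : S → ℕ∞) : S → ℕ∞ :=
  truncRset M M.R (Afun M T mlS x)

/-- the thresholded functional 𝓐_θ -/
noncomputable def Aθfun (M : CMDP S A) (T : Finset S) (mlS : S → ℕ∞) (θ : NNReal)
    (x : S → ℕ∞) : S → ℕ∞ :=
  fun s => if s ∈ T then mlS s else Finset.univ.inf (fun a => SVθ M mlS θ x s a)

/-- the thresholded operator 𝓑_θ -/
noncomputable def Bθfun (M : CMDP S A) (T : Finset S) (mlS : S → ℕ∞) (θ : NNReal)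
    (x : S → ℕ∞) : S → ℕ∞ :=
  truncRset M M.R (Aθfun M T mlS θ x)

/-- the initial vector `y_T`: `mlS` on `T` and ∞ elsewhere -/
noncomputable def yT (M : CMDP S A) (T : Finset S) (mlS : S → ℕ∞) : S → ℕ∞ :=
  fun s => if s ∈ T then mlS s else ⊤

/-- a vector of loads suffices for safely reaching `T` within `i` steps with
positive probability -/
def PosReachSatB (M : CMDP S A) (T : Finset S) (i : ℕ) (x : S → ℕ∞) : Prop :=
  ∃ σ : Strat S A, ∀ s (d : ℕ), x s = (d : ℕ∞) →
    AllSafe M σ s d ∧ probAvoid M T σ d i [] s < 1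

/-- a vector of loads suffices for safely reaching `T` with positive probability -/
def PosReachSat (M : CMDP S A) (T : Finset S) (x : S → ℕ∞) : Prop :=
  ∃ σ : Strat S A, ∀ s (d : ℕ), x s = (d : ℕ∞) →
    AllSafe M σ s d ∧ ∃ i, probAvoid M T σ d i [] s < 1

/-- a vector of loads suffices for safely reaching `T` almost surely -/
def ASReachSat (M : CMDP S A) (T : Finset S) (x : S → ℕ∞) : Prop :=
  ∃ σ : Strat S A, ∀ s (d : ℕ), x s = (d : ℕ∞) →
    d ≤ M.cap ∧ AllSafe M σ s d ∧ (⨅ n, probAvoid M T σ d n [] s) = 0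

/-- a vector of loads suffices for safely visiting `T` infinitely often a.s. -/
def ASBuchiSat (M : CMDP S A) (T : Finset S) (x : S → ℕ∞) : Prop :=
  ∃ σ : Strat S A, ∀ s (d : ℕ), x s = (d : ℕ∞) →
    d ≤ M.cap ∧ AllSafe M σ s d ∧ ∀ k : ℕ, (⨅ n, probFew M T σ d n k [] s) = 0

/-- a safe action in `s` with resource level `l` (w.r.t. the safety vector `mlS`) -/
def SafeAct (M : CMDP S A) (mlS : S → ℕ∞) (s : S) (l : ℕ) (a : A) : Prop :=
  AV M mlS s a ≤ (l : ℕ∞) ∨ (AV M mlS s a ≤ (M.cap : ℕ∞) ∧ s ∈ M.R) ∨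
    (M.cap : ℕ∞) < mlS s

/-- a safe strategy picks a safe action whenever one exists -/
def SafeStrat (M : CMDP S A) (mlS : S → ℕ∞) (σ : Strat S A) : Prop :=
  ∀ (d : ℕ) (h : List (S × A)) (s : S) (l : ℕ), levelOfHist M d h = some l →
    (∃ a, SafeAct M mlS s l a) → SafeAct M mlS s l (σ d h s)

/-- the CMDP `C(R')`: as `M`, but with reload set `R'` -/
def withReloads (M : CMDP S A) (R' : Finset S) : CMDP S A :=
  { M with R := R' }

/-- a finite-memory strategy -/
def FiniteMemory (σ : Strat S A) : Prop :=
  ∃ (Mem : Type) (_ : Finite Mem) (upd : Mem → S × A → Mem) (m0 : ℕ → Mem)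
    (out : Mem → S → A), ∀ d h s, σ d h s = out (h.foldl upd (m0 d)) s

/-- the modified CMDP C→T with a fresh absorbing reload state `sink = none` -/
noncomputable def toSink (M : CMDP S A) (T : Finset S) (mlS : S → ℕ∞) :
    CMDP (Option S) A where
  δ := fun s a t =>
    match s with
    | none => if t = none then 1 else 0
    | some s' =>
        if s' ∈ T then (if t = none then 1 else 0)
        else (match t with
              | none => 0
              | some t' => M.δ s' a t')
  δ_sum := by
    intro s a
    cases s with
    | none => simp [Fintype.sum_option]
    | some s' =>
        by_cases hs : s' ∈ T
        · simp [hs, Fintype.sum_option]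
        · simp [hs, Fintype.sum_option, M.δ_sum]
  γ := fun s a =>
    match s with
    | none => 1
    | some s' =>
        if s' ∈ T then (if mlS s' = ⊤ then M.cap + 1 else (mlS s').toNat)
        else M.γ s' a
  R := insert none (M.R.image some)
  cap := M.cap

end CMDP

/-!
`Ffun M T` is monotone and `Ffun M T (xT T) ≤ xT T`, so the iterates decrease. For any `v` with
`Ffun M T v ≤ v`, always playing an action attaining the minimum keeps
"cost so far + `v` (current state)" from increasing outside `T`. Since every cycle has positive
cost, a greedy run with finite `v` cannot revisit a state before reaching `T`, so it reaches `T`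
along a simple path, i.e. within `n` steps. Conversely, by induction on `k`, a strategy surely
reaching `T` within `k` steps from `s` with load `d` forces `(Ffun M T)^[k] (xT T) s ≤ d`. Applied
to `v = (Ffun M T)^[n + 1] (xT T)` the two facts show that the `n`-th iterate is a fixed point.
For minimality: in a decreasing CMDP a path of cost at most `d` is shorter than `(d + 1) |S|`
(pigeonhole on the pairs (cost so far, state)), so surely reaching `T` with load `d` means surely
reaching it within `(d + 1) |S|` steps.
-/

namespace CMDP

variable {S A : Type}

lemma hist_succ (ρ : Run S A) (i : ℕ) : hist ρ (i + 1) = hist ρ i ++ [(ρ.st i, ρ.ac i)] := by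
  simp [hist, List.range_succ]

def Strat.play (σ : Strat S A) (d : ℕ) (next : S → A → S) (s : S) : ℕ → List (S × A) × S
  | 0 => ([], s)
  | i + 1 =>
    let p := σ.play d next s i
    (p.1 ++ [(p.2, σ d p.1 p.2)], next p.2 (σ d p.1 p.2))

def Run.cons (s : S) (a : A) (ρ : Run S A) : Run S A where
  st := fun | 0 => s | i + 1 => ρ.st i
  ac := fun | 0 => a | i + 1 => ρ.ac i

@[simp] lemma Run.cons_st_zero (s : S) (a : A) (ρ : Run S A) : (ρ.cons s a).st 0 = s := rfl

@[simp] lemma Run.cons_st_succ (s : S) (a : A) (ρ : Run S A) (i : ℕ) :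
    (ρ.cons s a).st (i + 1) = ρ.st i := rfl

@[simp] lemma Run.cons_ac_zero (s : S) (a : A) (ρ : Run S A) : (ρ.cons s a).ac 0 = a := rfl

@[simp] lemma Run.cons_ac_succ (s : S) (a : A) (ρ : Run S A) (i : ℕ) :
    (ρ.cons s a).ac (i + 1) = ρ.ac i := rfl

lemma hist_cons_succ (s : S) (a : A) (ρ : Run S A) (i : ℕ) :
    hist (ρ.cons s a) (i + 1) = (s, a) :: hist ρ i := by
  simp [hist, List.range_succ_eq_map]

def Strat.afterStep (σ : Strat S A) (d : ℕ) (s : S) (a : A) : Strat S A :=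
  fun _ h u => σ d ((s, a) :: h) u

variable [Fintype S] [Fintype A]

lemma exists_pos_δ (M : CMDP S A) (s : S) (a : A) : ∃ t, 0 < M.δ s a t := by
  obtain ⟨t, -, ht⟩ := Finset.exists_ne_zero_of_sum_ne_zero (M.δ_sum s a ▸ one_ne_zero)
  exact ⟨t, pos_iff_ne_zero.mpr ht⟩

@[simp] lemma mem_Succ {M : CMDP S A} {s t : S} {a : A} : t ∈ M.Succ s a ↔ 0 < M.δ s a t := by
  simp [Succ]

lemma Succ_nonempty (M : CMDP S A) (s : S) (a : A) : (M.Succ s a).Nonempty :=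
  let ⟨t, ht⟩ := exists_pos_δ M s a
  ⟨t, mem_Succ.mpr ht⟩

lemma exists_compatible (M : CMDP S A) (σ : Strat S A) (d : ℕ) (s : S) :
    ∃ ρ : Run S A, Compatible M σ d ρ ∧ ρ.st 0 = s := by
  choose next hnext using exists_pos_δ M
  let ρ : Run S A := ⟨fun i => (σ.play d next s i).2,
    fun i => σ d (σ.play d next s i).1 (σ.play d next s i).2⟩
  have hhist : ∀ i, hist ρ i = (σ.play d next s i).1 := by
    intro i
    induction i with
    | zero => rfl
    | succ i ih => rw [hist_succ, ih]; rfl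
  exact ⟨ρ, fun i => ⟨by rw [hhist], hnext _ _⟩, rfl⟩

variable {M : CMDP S A}

lemma Compatible.validPath {σ : Strat S A} {d : ℕ} {ρ : Run S A}
    (hρ : Compatible M σ d ρ) (n : ℕ) : ValidPath M n ρ.st ρ.ac :=
  fun i _ => (hρ i).2

lemma Compatible.cons {σ : Strat S A} {d d' : ℕ} {s : S} {ρ : Run S A}
    (hρ : Compatible M (σ.afterStep d s (σ d [] s)) d' ρ)
    (hδ : 0 < M.δ s (σ d [] s) (ρ.st 0)) : Compatible M σ d (ρ.cons s (σ d [] s))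
  | 0 => ⟨rfl, hδ⟩
  | i + 1 => by rw [hist_cons_succ]; exact hρ i

lemma SatVec.mono {O O' : ℕ → Run S A → Prop} {x : S → ℕ∞} (h : SatVec M O x)
    (hO : ∀ d ρ, O d ρ → O' d ρ) : SatVec M O' x :=
  let ⟨σ, hσ⟩ := h
  ⟨σ, fun s d hd ρ hρ h0 => hO d ρ (hσ s d hd ρ hρ h0)⟩

lemma NRReachB.of_cons {T : Finset S} {k d : ℕ} {s : S} {a : A} {ρ : Run S A} (hs : s ∉ T)
    (h : NRReachB M T (k + 1) d (ρ.cons s a)) :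
    M.γ s a ≤ d ∧ NRReachB M T k (d - M.γ s a) ρ := by
  obtain ⟨f, hf, hfT, hcost⟩ := h
  cases f with
  | zero => exact absurd hfT hs
  | succ f =>
    simp only [Finset.sum_range_succ', Run.cons_st_succ, Run.cons_ac_succ, Run.cons_st_zero,
      Run.cons_ac_zero] at hcost
    exact ⟨by omega, f, by omega, hfT, by omega⟩

section Decreasing

variable (hdec : Decreasing M)
include hdec

lemma Decreasing.ne_of_sum_Ico_eq_zero {j : ℕ} {st : ℕ → S} {ac : ℕ → A}
    (hpath : ValidPath M j st ac) {i : ℕ} (hij : i < j)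
    (hzero : ∑ m ∈ Finset.Ico i j, M.γ (st m) (ac m) = 0) : st i ≠ st j := by
  intro heq
  obtain ⟨m, hm, hγ⟩ := hdec (j - i) (fun m => st (i + m)) (fun m => ac (i + m)) (by omega)
    (fun m hm => hpath (i + m) (by omega)) (by simpa [Nat.add_sub_cancel' hij.le] using heq)
  have := Finset.sum_eq_zero_iff.mp hzero (i + m) (Finset.mem_Ico.mpr ⟨by omega, by omega⟩)
  omega

lemma Decreasing.length_lt_of_sum_le {f d : ℕ} {st : ℕ → S} {ac : ℕ → A}
    (hpath : ValidPath M f st ac) (hcost : ∑ m ∈ Finset.range f, M.γ (st m) (ac m) ≤ d) :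
    f < (d + 1) * Fintype.card S := by
  set c : ℕ → ℕ := fun i => ∑ m ∈ Finset.range i, M.γ (st m) (ac m) with hc
  have hcd : ∀ i ≤ f, c i ≤ d := fun i hi =>
    (Finset.sum_le_sum_of_subset (Finset.range_subset_range.mpr hi)).trans hcost
  have hne : ∀ i j, i < j → j ≤ f → c i = c j → st i ≠ st j := by
    intro i j hij hjf hcij
    refine hdec.ne_of_sum_Ico_eq_zero (fun m hm => hpath m (by omega)) hij ?_
    have := Finset.sum_range_add_sum_Ico (fun m => M.γ (st m) (ac m)) hij.le
    simp only [hc] at hcij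
    omega
  by_contra! hf
  obtain ⟨i, j, hij, heq⟩ := Fintype.exists_ne_map_eq_of_card_lt
    (fun i : Fin (f + 1) => ((⟨c i, Nat.lt_succ_of_le (hcd i (by omega))⟩ : Fin (d + 1)), st i))
    (by simp only [Fintype.card_prod, Fintype.card_fin]; omega)
  simp only [Prod.mk.injEq, Fin.mk.injEq] at heq
  rcases lt_or_gt_of_ne (Fin.val_ne_of_ne hij) with h | h
  · exact hne i j h (by omega) heq.1 heq.2
  · exact hne j i h (by omega) heq.1.symm heq.2.symm

lemma Decreasing.reachB_of_reach {T : Finset S} {d : ℕ} {ρ : Run S A}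
    (hpath : ∀ n, ValidPath M n ρ.st ρ.ac) (h : NRReach M T d ρ) :
    NRReachB M T ((d + 1) * Fintype.card S) d ρ := by
  obtain ⟨-, f, -, hfT, hcost⟩ := h
  exact ⟨f, (hdec.length_lt_of_sum_le (hpath f) hcost).le, hfT, hcost⟩

end Decreasing

section Greedy

variable {T : Finset S} {v : S → ℕ∞} {g : S → A} (hg : ∀ s ∉ T, M.AV v s (g s) ≤ v s)
  {d : ℕ} {ρ : Run S A} (hρ : Compatible M (fun _ _ u => g u) d ρ)
include hg hρ

lemma greedy_sum_Ico_add_le {i j : ℕ} (hij : i ≤ j) (hT : ∀ m, i ≤ m → m < j → ρ.st m ∉ T) :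
    ((∑ m ∈ Finset.Ico i j, M.γ (ρ.st m) (ρ.ac m) : ℕ) : ℕ∞) + v (ρ.st j) ≤ v (ρ.st i) := by
  induction j, hij using Nat.le_induction with
  | base => simp
  | succ j hij ih =>
    have hstep : (M.γ (ρ.st j) (ρ.ac j) : ℕ∞) + v (ρ.st (j + 1)) ≤ v (ρ.st j) := by
      obtain ⟨hac, hδ⟩ := hρ j
      rw [hac] at hδ ⊢
      refine le_trans ?_ (hg _ (hT j hij (by omega)))
      unfold AV
      gcongr
      exact Finset.le_sup (mem_Succ.mpr hδ)
    calc ((∑ m ∈ Finset.Ico i (j + 1), M.γ (ρ.st m) (ρ.ac m) : ℕ) : ℕ∞) + v (ρ.st (j + 1))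
        = ((∑ m ∈ Finset.Ico i j, M.γ (ρ.st m) (ρ.ac m) : ℕ) : ℕ∞)
            + ((M.γ (ρ.st j) (ρ.ac j) : ℕ∞) + v (ρ.st (j + 1))) := by
          rw [Finset.sum_Ico_succ_top hij, Nat.cast_add, add_assoc]
      _ ≤ ((∑ m ∈ Finset.Ico i j, M.γ (ρ.st m) (ρ.ac m) : ℕ) : ℕ∞) + v (ρ.st j) := by gcongr
      _ ≤ v (ρ.st i) := ih fun m hm hmj => hT m hm (by omega)

lemma greedy_st_ne (hdec : Decreasing M) {i j : ℕ} (hij : i < j) (hT : ∀ m < j, ρ.st m ∉ T)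
    (hfin : v (ρ.st 0) ≠ ⊤) : ρ.st i ≠ ρ.st j := by
  intro heq
  have h0i := greedy_sum_Ico_add_le hg hρ (Nat.zero_le i) fun m _ hm => hT m (by omega)
  have hij' := greedy_sum_Ico_add_le hg hρ hij.le fun m _ hm => hT m hm
  rw [← heq] at hij'
  have hzero : ∑ m ∈ Finset.Ico i j, M.γ (ρ.st m) (ρ.ac m) = 0 := by
    lift v (ρ.st i) to ℕ using ne_top_of_le_ne_top hfin (le_add_self.trans h0i) with x
    norm_cast at hij'
    omega
  exact hdec.ne_of_sum_Ico_eq_zero (hρ.validPath j) hij hzero heq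

lemma greedy_reachB (hdec : Decreasing M) {n : ℕ}
    (hn : n ∈ upperBounds {k | ∃ (st : ℕ → S) (ac : ℕ → A), SimplePath M k st ac})
    (hd : v (ρ.st 0) = d) : NRReachB M T n d ρ := by
  have hfin : v (ρ.st 0) ≠ ⊤ := hd ▸ ENat.natCast_ne_top d
  have hhit : ∃ f ≤ n, ρ.st f ∈ T := by
    by_contra! hT
    have hsimple : SimplePath M (n + 1) ρ.st ρ.ac :=
      ⟨hρ.validPath _, fun i j hij hj heq =>
        absurd heq (greedy_st_ne hg hρ hdec hij (fun m hm => hT m (by omega)) hfin)⟩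
    exact absurd (hn ⟨_, _, hsimple⟩) (by omega)
  obtain ⟨hfn, hfT⟩ := Nat.find_spec hhit
  have hcost := greedy_sum_Ico_add_le hg hρ (Nat.zero_le (Nat.find hhit))
    fun m _ hm hmT => Nat.find_min hhit hm ⟨by omega, hmT⟩
  rw [hd, ← Finset.range_eq_Ico] at hcost
  exact ⟨_, hfn, hfT, by exact_mod_cast le_self_add.trans hcost⟩

end Greedy

section Functional

variable [DecidableEq S] (M) (T : Finset S)

lemma Ffun_monotone : Monotone (Ffun M T) := by
  intro v w hvw s
  unfold Ffun AV
  split_ifs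
  · exact le_rfl
  · exact Finset.inf_mono_fun fun a _ => by gcongr; exact hvw _

lemma antitone_iterate_xT : Antitone fun k => (Ffun M T)^[k] (xT T) := by
  refine (Ffun_monotone M T).antitone_iterate_of_map_le fun s => ?_
  unfold Ffun xT
  split_ifs <;> simp

lemma Ffun_of_notMem {v : S → ℕ∞} {s : S} (hs : s ∉ T) :
    Ffun M T v s = Finset.univ.inf (M.AV v s) :=
  if_neg hs

lemma iterate_xT_of_mem (k : ℕ) {s : S} (hs : s ∈ T) : (Ffun M T)^[k] (xT T) s = 0 := by
  cases k with
  | zero => exact if_pos hs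
  | succ k => rw [Function.iterate_succ_apply']; exact if_pos hs

lemma iterate_xT_le_iterate_of_isFixedPt {n : ℕ}
    (hfix : Function.IsFixedPt (Ffun M T) ((Ffun M T)^[n] (xT T))) (m : ℕ) :
    (Ffun M T)^[n] (xT T) ≤ (Ffun M T)^[m] (xT T) :=
  calc (Ffun M T)^[n] (xT T) = (Ffun M T)^[m + n] (xT T) := by
        rw [Function.iterate_add_apply, hfix.iterate m]
    _ ≤ (Ffun M T)^[m] (xT T) := antitone_iterate_xT M T (Nat.le_add_right m n)

/-- After the first action `a = σ d [] s`, the residual strategy surely reaches `T` from every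
successor within `k` steps with load `d - γ s a`. -/
lemma iterate_xT_le_of_sureSat_reachB {k : ℕ} {σ : Strat S A} {s : S} {d : ℕ}
    (h : SureSat M σ s d (NRReachB M T k)) : (Ffun M T)^[k] (xT T) s ≤ d := by
  by_cases hs : s ∈ T
  · rw [iterate_xT_of_mem M T k hs]; exact zero_le
  induction k generalizing σ s d with
  | zero =>
    obtain ⟨ρ, hρ, h0⟩ := exists_compatible M σ d s
    obtain ⟨f, hf, hfT, -⟩ := h ρ hρ h0
    rw [Nat.le_zero.mp hf, h0] at hfT
    exact absurd hfT hs
  | succ k ih =>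
    set a := σ d [] s
    have hsucc : ∀ t ∈ M.Succ s a, (M.γ s a : ℕ∞) + (Ffun M T)^[k] (xT T) t ≤ d := by
      intro t ht
      have hcons : ∀ ρ, Compatible M (σ.afterStep d s a) (d - M.γ s a) ρ → ρ.st 0 = t →
          M.γ s a ≤ d ∧ NRReachB M T k (d - M.γ s a) ρ :=
        fun ρ hρ h0 => (h _ (hρ.cons (h0 ▸ mem_Succ.mp ht)) rfl).of_cons hs
      obtain ⟨ρ, hρ, h0⟩ := exists_compatible M (σ.afterStep d s a) (d - M.γ s a) t
      have hγ := (hcons ρ hρ h0).1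
      have hle : (Ffun M T)^[k] (xT T) t ≤ (d - M.γ s a : ℕ) := by
        by_cases ht : t ∈ T
        · rw [iterate_xT_of_mem M T k ht]; exact zero_le
        exact ih (fun ρ hρ h0 => (hcons ρ hρ h0).2) ht
      calc (M.γ s a : ℕ∞) + (Ffun M T)^[k] (xT T) t ≤ M.γ s a + (d - M.γ s a : ℕ) := by gcongr
        _ = d := by norm_cast; omega
    obtain ⟨t, ht, hsup⟩ :=
      Finset.exists_mem_eq_sup _ (Succ_nonempty M s a) ((Ffun M T)^[k] (xT T))
    calc (Ffun M T)^[k + 1] (xT T) s ≤ M.AV ((Ffun M T)^[k] (xT T)) s a := by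
          rw [Function.iterate_succ_apply', Ffun_of_notMem M T hs]
          exact Finset.inf_le (Finset.mem_univ a)
      _ ≤ d := by unfold AV; rw [hsup]; exact hsucc t ht

lemma iterate_xT_le_of_satVec_reachB {k : ℕ} {y : S → ℕ∞} (h : SatVec M (NRReachB M T k) y) :
    (Ffun M T)^[k] (xT T) ≤ y := by
  obtain ⟨σ, hσ⟩ := h
  intro s
  rcases eq_or_ne (y s) ⊤ with hys | hys
  · simp [hys]
  lift y s to ℕ using hys with d hd
  exact iterate_xT_le_of_sureSat_reachB M T (hσ s d hd.symm)

lemma satVec_reachB_of_Ffun_le [Nonempty A] (hdec : Decreasing M) {n : ℕ}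
    (hn : n ∈ upperBounds {k | ∃ (st : ℕ → S) (ac : ℕ → A), SimplePath M k st ac})
    {v : S → ℕ∞} (hv : Ffun M T v ≤ v) : SatVec M (NRReachB M T n) v := by
  have hgreedy : ∀ s, ∃ a, s ∉ T → M.AV v s a ≤ v s := by
    intro s
    obtain ⟨a, -, ha⟩ := Finset.exists_mem_eq_inf Finset.univ Finset.univ_nonempty (M.AV v s)
    refine ⟨a, fun hs => ?_⟩
    simpa only [Ffun_of_notMem M T hs, ha] using hv s
  choose g hg using hgreedy
  exact ⟨fun _ _ u => g u, fun s d hd ρ hρ h0 => greedy_reachB hg hρ hdec hn (h0 ▸ hd)⟩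

lemma iterate_xT_le_of_satVec_reach (hdec : Decreasing M) {n : ℕ}
    (hfix : Function.IsFixedPt (Ffun M T) ((Ffun M T)^[n] (xT T))) {y : S → ℕ∞}
    (hy : SatVec M (NRReach M T) y) : (Ffun M T)^[n] (xT T) ≤ y := by
  obtain ⟨σ, hσ⟩ := hy
  intro s
  rcases eq_or_ne (y s) ⊤ with hys | hys
  · simp [hys]
  lift y s to ℕ using hys with d hd
  calc (Ffun M T)^[n] (xT T) s ≤ (Ffun M T)^[(d + 1) * Fintype.card S] (xT T) s :=
        iterate_xT_le_iterate_of_isFixedPt M T hfix _ s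
    _ ≤ d := iterate_xT_le_of_sureSat_reachB M T fun ρ hρ h0 =>
        hdec.reachB_of_reach hρ.validPath (hσ s d hd.symm ρ hρ h0)

end Functional

end CMDP

open CMDP in
theorem stmt2_general {S A : Type} [Fintype S] [Fintype A] [DecidableEq S]
    (M : CMDP S A) (T : Finset S) (n : ℕ)
    (hdec : Decreasing M)
    (hn : IsGreatest {k : ℕ | ∃ (st : ℕ → S) (ac : ℕ → A), SimplePath M k st ac} n) :
    Ffun M T ((Ffun M T)^[n] (xT T)) = (Ffun M T)^[n] (xT T) ∧
    IsML (SatVec M (NRReach M T)) ((Ffun M T)^[n] (xT T)) := by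
  obtain ⟨⟨-, ac, -⟩, hmax⟩ := hn
  have : Nonempty A := ⟨ac 0⟩
  have hanti := antitone_iterate_xT M T
  have hfix : Ffun M T ((Ffun M T)^[n] (xT T)) = (Ffun M T)^[n] (xT T) := by
    rw [← Function.iterate_succ_apply' (Ffun M T)]
    refine le_antisymm (hanti n.le_succ) (iterate_xT_le_of_satVec_reachB M T ?_)
    refine satVec_reachB_of_Ffun_le M T hdec hmax ?_
    rw [← Function.iterate_succ_apply' (Ffun M T)]
    exact hanti (n + 1).le_succ
  exact ⟨hfix, (satVec_reachB_of_Ffun_le M T hdec hmax hfix.le).mono fun _ _ h => ⟨n, h⟩,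
    fun _ hy => iterate_xT_le_of_satVec_reach M T hdec hfix hy⟩

open CMDP in
/-- in a decreasing CMDP, iterating 𝓕 on `x_T` reaches a fixed point
after at most `n` steps (`n` = length of the longest simple path), and this fixed
point is the minimal-load vector for sure non-reloading reachability. -/
theorem stmt2 {S A : Type} [Fintype S] [Fintype A] [DecidableEq S] [DecidableEq A]
    (M : CMDP S A) (T : Finset S) (n : ℕ)
    (hdec : Decreasing M)
    (hn : IsGreatest {k : ℕ | ∃ (st : ℕ → S) (ac : ℕ → A), SimplePath M k st ac} n) :
    Ffun M T ((Ffun M T)^[n] (xT T)) = (Ffun M T)^[n] (xT T) ∧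
    IsML (SatVec M (NRReach M T)) ((Ffun M T)^[n] (xT T)) :=
  stmt2_general M T n hdec hn
end

section
/- Monotonicity of SV with respect to the safety bound: for any vectors x ≥ y and any state-action pair (s,a), SV(x)(s,a) ≥ SV(y)(s,a); moreover, if x ≥ ml_S componentwise, then SV(x)(s,a) ≥ AV(ml_S)(s,a) ≥ ml_S(s) for all s ∉ T with ml_S(s) realized by some action, hence 𝓐(x) ≥ ml_S whenever x ≥ ml_S. -/
open Classical

theorem Finset.sup_le_sup_erase {ι α : Type*} [DecidableEq ι] [SemilatticeSup α] [OrderBot α]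
    (s : Finset ι) (f : ι → α) (i : ι) : s.sup f ≤ f i ⊔ (s.erase i).sup f :=
  calc s.sup f ≤ (insert i (s.erase i)).sup f := Finset.sup_mono (Finset.insert_erase_subset i s)
    _ = f i ⊔ (s.erase i).sup f := Finset.sup_insert

namespace CMDP

variable {S A : Type} [Fintype S] [Fintype A] [DecidableEq S] (M : CMDP S A) (mlS : S → ℕ∞)

theorem HV_mono (s : S) (a : A) (s' : S) : Monotone fun x => M.HV mlS x s a s' :=
  fun _ _ hxy => max_le_max (hxy s') le_rfl

theorem SV_mono (s : S) (a : A) : Monotone fun x => M.SV mlS x s a :=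
  fun _ _ hxy => add_le_add_right (Finset.inf_mono_fun fun s' _ => M.HV_mono mlS s a s' hxy) _

variable {mlS} {x : S → ℕ∞}

theorem sup_le_HV (hx : mlS ≤ x) (s : S) (a : A) (s' : S) :
    (M.Succ s a).sup mlS ≤ M.HV mlS x s a s' :=
  calc (M.Succ s a).sup mlS ≤ mlS s' ⊔ ((M.Succ s a).erase s').sup mlS :=
        Finset.sup_le_sup_erase _ _ _
    _ ≤ M.HV mlS x s a s' := max_le_max (hx s') le_rfl

theorem AV_le_SV (hx : mlS ≤ x) (s : S) (a : A) : M.AV mlS s a ≤ M.SV mlS x s a :=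
  add_le_add_right (Finset.le_inf fun s' _ => M.sup_le_HV hx s a s') _

theorem le_Afun {T : Finset S} (hreal : ∀ (s : S) (a : A), s ∉ T → mlS s ≤ M.AV mlS s a)
    (hx : mlS ≤ x) : mlS ≤ M.Afun T mlS x := by
  intro s
  by_cases hs : s ∈ T
  · simp only [Afun, hs, if_true, le_refl]
  · simp only [Afun, hs, if_false]
    exact Finset.le_inf fun a _ => (hreal s a hs).trans (M.AV_le_SV hx s a)

end CMDP

open CMDP in
theorem stmt12_general {S A : Type} [Fintype S] [Fintype A] [DecidableEq S]
    (M : CMDP S A) (T : Finset S) (mlS : S → ℕ∞)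
    (hreal : ∀ (s : S) (a : A), s ∉ T → mlS s ≤ AV M mlS s a) :
    (∀ x y : S → ℕ∞, y ≤ x → ∀ (s : S) (a : A), SV M mlS y s a ≤ SV M mlS x s a) ∧
    (∀ x : S → ℕ∞, mlS ≤ x →
      (∀ (s : S) (a : A), s ∉ T →
        AV M mlS s a ≤ SV M mlS x s a ∧ mlS s ≤ AV M mlS s a) ∧
      mlS ≤ Afun M T mlS x) :=
  ⟨fun _ _ hyx s a => M.SV_mono mlS s a hyx,
    fun _ hx => ⟨fun s a hs => ⟨M.AV_le_SV hx s a, hreal s a hs⟩, M.le_Afun hreal hx⟩⟩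

open CMDP in
/-- monotonicity of `SV`: `x ≥ y → SV(x) ≥ SV(y)`; and if
`x ≥ ml_S` then `SV(x)(s,a) ≥ AV(ml_S)(s,a) ≥ ml_S(s)` for `s ∉ T`, hence
`𝓐(x) ≥ ml_S`. -/
theorem stmt12 {S A : Type} [Fintype S] [Fintype A] [DecidableEq S] [DecidableEq A]
    (M : CMDP S A) (T : Finset S) (mlS : S → ℕ∞)
    (hreal : ∀ (s : S) (a : A), s ∉ T → mlS s ≤ AV M mlS s a) :
    (∀ x y : S → ℕ∞, y ≤ x → ∀ (s : S) (a : A), SV M mlS y s a ≤ SV M mlS x s a) ∧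
    (∀ x : S → ℕ∞, mlS ≤ x →
      (∀ (s : S) (a : A), s ∉ T →
        AV M mlS s a ≤ SV M mlS x s a ∧ mlS s ≤ AV M mlS s a) ∧
      mlS ≤ Afun M T mlS x) :=
  stmt12_general M T mlS hreal
end

section
/- Upon termination of the safety algorithm that iteratively removes unusable reload states, every removed reload state t ∈ R∖R' has infinite minimal safety load: ml_S(t) = ∞. Formally, if R'₀ = R and R'_{i+1} = R'_i ∖ {r ∈ R'_i : ml_{C(R'_i)}(Reach⁺_{R'_i})(r) > cap}, then for every i and every t ∈ R ∖ R'_i, no strategy from t loaded with cap keeps all runs safe in the decreasing CMDP C. -/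
/-!
Let `σ` keep every run from a removed reload state `t` safe with load `cap`. Since the CMDP is
decreasing, consumption along a run is unbounded, so a safe run must return to a reload state
after at least one step and before consuming more than `cap`. Continuing `σ` from that state
is again safe with load `cap`, so by induction on `i` the state reached was not removed
before `t`, i.e. lies in `R'ᵢ`. Hence `σ` surely reaches `R'ᵢ` in at least one step from `t`
with load `cap`, so `ml(Reach⁺_{R'ᵢ})(t) ≤ cap` and `t` would not have been removed.
-/

open Classical

namespace CMDP

section Runs

variable {S A : Type}

def Run.drop (ρ : Run S A) (f : ℕ) : Run S A :=
  ⟨fun j => ρ.st (f + j), fun j => ρ.ac (f + j)⟩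

def Run.splice (ρ : Run S A) (f : ℕ) (ρ' : Run S A) : Run S A :=
  ⟨fun j => if j < f then ρ.st j else ρ'.st (j - f),
   fun j => if j < f then ρ.ac j else ρ'.ac (j - f)⟩

def Strat.after (σ : Strat S A) (d : ℕ) (h : List (S × A)) : Strat S A :=
  fun _ h' s => σ d (h ++ h') s

@[simp]
lemma Run.splice_drop (ρ ρ' : Run S A) (f : ℕ) : (ρ.splice f ρ').drop f = ρ' := by
  simp [Run.splice, Run.drop]

lemma Run.splice_st_of_le {ρ ρ' : Run S A} {f j : ℕ} (h0 : ρ'.st 0 = ρ.st f) (hj : j ≤ f) :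
    (ρ.splice f ρ').st j = ρ.st j := by
  rcases hj.lt_or_eq with hj | rfl
  · simp [Run.splice, hj]
  · simp [Run.splice, h0]

lemma Run.splice_ac_of_lt {ρ ρ' : Run S A} {f j : ℕ} (hj : j < f) :
    (ρ.splice f ρ').ac j = ρ.ac j := by
  simp [Run.splice, hj]

lemma hist_add (ρ : Run S A) (f i : ℕ) : hist ρ (f + i) = hist ρ f ++ hist (ρ.drop f) i := by
  simp [hist, List.range_add, Run.drop]

lemma hist_splice_of_le {ρ ρ' : Run S A} {f j : ℕ} (hj : j ≤ f) :
    hist (ρ.splice f ρ') j = hist ρ j := by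
  refine List.map_congr_left fun i hi => ?_
  have hi : i < f := (List.mem_range.1 hi).trans_le hj
  simp [Run.splice, hi]

end Runs

section Paths

variable {S A : Type} [Fintype S] [Fintype A] {M : CMDP S A}

lemma Compatible.splice {σ : Strat S A} {d d' f : ℕ} {ρ ρ' : Run S A}
    (hρ : Compatible M σ d ρ) (hρ' : Compatible M (σ.after d (hist ρ f)) d' ρ')
    (h0 : ρ'.st 0 = ρ.st f) : Compatible M σ d (ρ.splice f ρ') := by
  intro i
  rcases lt_or_ge i f with hi | hi
  · rw [Run.splice_ac_of_lt hi, hist_splice_of_le hi.le, Run.splice_st_of_le h0 hi.le,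
      Run.splice_st_of_le h0 hi]
    exact hρ i
  · obtain ⟨j, rfl⟩ := Nat.exists_eq_add_of_le hi
    have hst : ∀ k, (ρ.splice f ρ').st (f + k) = ρ'.st k := fun k => by simp [Run.splice]
    have hac : (ρ.splice f ρ').ac (f + j) = ρ'.ac j := by simp [Run.splice]
    rw [hac, hist_add, hist_splice_of_le le_rfl, Run.splice_drop, hst, add_assoc, hst]
    exact hρ' j

lemma Decreasing.exists_pos_consumption_ge (hdec : Decreasing M) {st : ℕ → S} {ac : ℕ → A}
    (hv : ∀ i, 0 < M.δ (st i) (ac i) (st (i + 1))) (k : ℕ) :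
    ∃ i, k ≤ i ∧ 0 < M.γ (st i) (ac i) := by
  obtain ⟨a, b, hab, hcycle⟩ := Set.finite_univ.exists_lt_map_eq_of_forall_mem
    (f := fun n => st (k + n)) (fun _ => Set.mem_univ _)
  obtain ⟨m, hm, hpos⟩ := hdec (b - a) (fun m => st (k + a + m)) (fun m => ac (k + a + m))
    (by omega) (fun i _ => hv (k + a + i))
    (by simpa [add_assoc, Nat.add_sub_cancel' hab.le] using hcycle)
  exact ⟨k + a + m, by omega, hpos⟩

lemma Decreasing.exists_consumption_gt (hdec : Decreasing M) {st : ℕ → S} {ac : ℕ → A}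
    (hv : ∀ i, 0 < M.δ (st i) (ac i) (st (i + 1))) (b : ℕ) :
    ∃ m, b < ∑ j ∈ Finset.range m, M.γ (st j) (ac j) := by
  induction b with
  | zero =>
    obtain ⟨i, -, hi⟩ := hdec.exists_pos_consumption_ge hv 0
    exact ⟨i + 1, hi.trans_le (Finset.single_le_sum (f := fun j => M.γ (st j) (ac j))
      (fun _ _ => Nat.zero_le _) (Finset.self_mem_range_succ i))⟩
  | succ b ih =>
    obtain ⟨m, hm⟩ := ih
    obtain ⟨i, hmi, hi⟩ := hdec.exists_pos_consumption_ge hv m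
    refine ⟨i + 1, ?_⟩
    have hmono := Finset.sum_le_sum_of_subset (f := fun j => M.γ (st j) (ac j))
      (Finset.range_subset_range.2 hmi)
    rw [Finset.sum_range_succ]
    omega

lemma satVec_of_sureSat {σ : Strat S A} {t : S} {d : ℕ} {O : ℕ → Run S A → Prop}
    (h : SureSat M σ t d O) :
    SatVec M O (fun s => if s = t then (d : ℕ∞) else ⊤) := by
  refine ⟨σ, fun s d' hs => ?_⟩
  dsimp only at hs
  split_ifs at hs with hst
  · obtain rfl := Nat.cast_inj.mp hs
    exact hst ▸ h
  · exact absurd hs.symm (ENat.natCast_ne_top d')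

section Levels

variable [DecidableEq S]

lemma levels_add {d f l : ℕ} {ρ : Run S A} (hl : levels M d ρ.st ρ.ac f = some l) (i : ℕ) :
    levels M d ρ.st ρ.ac (f + i) = levels M l (ρ.drop f).st (ρ.drop f).ac i := by
  induction i with
  | zero => exact hl
  | succ i ih => exact congrArg (M.nextLevel _ _) ih

/-- Leaving a reload state resets the level, so the initial load is forgotten. -/
lemma levels_succ_eq_of_mem_R {st : ℕ → S} {ac : ℕ → A} (h0 : st 0 ∈ M.R) (d d' i : ℕ) :
    levels M d st ac (i + 1) = levels M d' st ac (i + 1) := by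
  induction i with
  | zero => simp [levels, nextLevel, h0]
  | succ i ih => exact congrArg (M.nextLevel _ _) ih

lemma levels_succ_of_not_mem_R {st : ℕ → S} {ac : ℕ → A} (h0 : st 0 ∈ M.R) (d j : ℕ)
    (hno : ∀ i < j, st (i + 1) ∉ M.R) :
    levels M d st ac (j + 1) =
      if ∑ i ∈ Finset.range (j + 1), M.γ (st i) (ac i) ≤ M.cap
      then some (M.cap - ∑ i ∈ Finset.range (j + 1), M.γ (st i) (ac i)) else none := by
  induction j with
  | zero => simp [levels, nextLevel, h0]
  | succ j ih =>
    have hj : st (j + 1) ∉ M.R := hno j (by omega)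
    change M.nextLevel _ _ (levels M d st ac (j + 1)) = _
    rw [ih fun i hi => hno i (by omega), Finset.sum_range_succ _ (j + 1)]
    split_ifs <;> simp_all [nextLevel] <;> omega

lemma SafeRun.exists_return_to_R (hdec : Decreasing M) {d : ℕ} {ρ : Run S A}
    (hv : ∀ i, 0 < M.δ (ρ.st i) (ρ.ac i) (ρ.st (i + 1))) (h0 : ρ.st 0 ∈ M.R)
    (hsafe : SafeRun M d ρ) :
    ∃ f, 1 ≤ f ∧ ρ.st f ∈ M.R ∧
      ∑ j ∈ Finset.range f, M.γ (ρ.st j) (ρ.ac j) ≤ M.cap := by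
  have hex : ∃ n, ρ.st (n + 1) ∈ M.R ∨
      M.cap < ∑ j ∈ Finset.range (n + 1), M.γ (ρ.st j) (ρ.ac j) := by
    obtain ⟨m, hm⟩ := hdec.exists_consumption_gt hv M.cap
    have hm0 : m ≠ 0 := by rintro rfl; simp at hm
    obtain ⟨n, rfl⟩ := Nat.exists_eq_succ_of_ne_zero hm0
    exact ⟨n, Or.inr hm⟩
  have hlev := levels_succ_of_not_mem_R (ac := ρ.ac) h0 d (Nat.find hex)
    fun i hi => fun hR => Nat.find_min hex hi (Or.inl hR)
  have hsum : ∑ j ∈ Finset.range (Nat.find hex + 1), M.γ (ρ.st j) (ρ.ac j) ≤ M.cap := by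
    by_contra h
    exact hsafe _ (by rw [hlev, if_neg h])
  exact ⟨_, Nat.le_add_left 1 _, (Nat.find_spec hex).resolve_right hsum.not_gt, hsum⟩

lemma AllSafe.after {σ : Strat S A} {t : S} {d f : ℕ} {ρ : Run S A}
    (hσ : AllSafe M σ t d) (hρ : Compatible M σ d ρ) (h0 : ρ.st 0 = t)
    (hf : ρ.st f ∈ M.R) :
    AllSafe M (σ.after d (hist ρ f)) (ρ.st f) M.cap := by
  intro ρ' hρ' h0' i
  have hsafe := hσ _ (hρ.splice hρ' h0') (by rw [Run.splice_st_of_le h0' (Nat.zero_le f), h0])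
  cases i with
  | zero => simp [levels]
  | succ i =>
    obtain ⟨l, hl⟩ := Option.ne_none_iff_exists'.mp (hsafe f)
    have := hsafe (f + (i + 1))
    rwa [levels_add hl, Run.splice_drop, levels_succ_eq_of_mem_R (h0' ▸ hf) l M.cap] at this

lemma sureSat_reachPlus_of_allSafe (hdec : Decreasing M) {R' : Finset S} {σ : Strat S A}
    {t : S} (ht : t ∈ M.R) (hσ : AllSafe M σ t M.cap)
    (hR' : ∀ r ∈ M.R, r ∉ R' → ∀ σ' : Strat S A, ¬ AllSafe M σ' r M.cap) :
    SureSat M σ t M.cap (NRReachPlus M R') := by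
  intro ρ hρ h0
  obtain ⟨f, hf1, hfR, hsum⟩ :=
    (hσ ρ hρ h0).exists_return_to_R hdec (fun i => (hρ i).2) (h0 ▸ ht)
  refine ⟨f, hf1, ?_, hsum⟩
  by_contra hf
  exact hR' _ hfR hf _ (hσ.after hρ h0 hfR)

/-- The reload sets `R'_i` computed by the pruning algorithm. -/
def prunedReloads (M : CMDP S A) (mlp : Finset S → S → ℕ∞) (i : ℕ) : Finset S :=
  Nat.rec (motive := fun _ => Finset S) M.R
    (fun _ Ri => Ri.filter (fun r => mlp Ri r ≤ (M.cap : ℕ∞))) i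

lemma not_allSafe_of_not_mem_prunedReloads (hdec : Decreasing M) {mlp : Finset S → S → ℕ∞}
    (hmlp : ∀ R' y, SatVec M (NRReachPlus M R') y → mlp R' ≤ y) (i : ℕ) :
    ∀ t ∈ M.R, t ∉ prunedReloads M mlp i → ∀ σ : Strat S A, ¬ AllSafe M σ t M.cap := by
  induction i with
  | zero => exact fun t ht hnt => absurd ht hnt
  | succ i ih =>
    intro t ht hnt σ hσ
    by_cases hti : t ∈ prunedReloads M mlp i
    · have hsat := satVec_of_sureSat (sureSat_reachPlus_of_allSafe hdec ht hσ ih)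
      have hle : mlp (prunedReloads M mlp i) t ≤ M.cap := by
        simpa using hmlp _ _ hsat t
      exact hnt (Finset.mem_filter.2 ⟨hti, hle⟩)
    · exact ih t ht hti σ hσ

end Levels

end Paths

end CMDP

open CMDP in
theorem stmt15_general {S A : Type} [Fintype S] [Fintype A] [DecidableEq S]
    (M : CMDP S A) (hdec : Decreasing M)
    (mlp : Finset S → (S → ℕ∞))
    (hmlp : ∀ R' : Finset S, IsML (SatVec M (NRReachPlus M R')) (mlp R')) :
    ∀ i : ℕ, ∀ t ∈ M.R,
      t ∉ (Nat.rec (motive := fun _ => Finset S) M.R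
            (fun _ Ri => Ri.filter (fun r => mlp Ri r ≤ (M.cap : ℕ∞))) i) →
      ¬ ∃ σ : Strat S A, AllSafe M σ t M.cap := by
  rintro i t ht hnt ⟨σ, hσ⟩
  exact not_allSafe_of_not_mem_prunedReloads hdec (fun R' => (hmlp R').2) i t ht hnt σ hσ

open CMDP in
/-- in the iterative removal of unusable reload states
(`R'₀ = R`, `R'_{i+1} = R'_i ∖ {r ∈ R'_i : ml(Reach⁺_{R'_i})(r) > cap}`), every
removed reload state admits no strategy keeping all runs safe even when loaded
with `cap`. -/
theorem stmt15 {S A : Type} [Fintype S] [Fintype A] [DecidableEq S] [DecidableEq A]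
    (M : CMDP S A) (hdec : Decreasing M)
    (mlp : Finset S → (S → ℕ∞))
    (hmlp : ∀ R' : Finset S, IsML (SatVec M (NRReachPlus M R')) (mlp R')) :
    ∀ i : ℕ, ∀ t ∈ M.R,
      t ∉ (Nat.rec (motive := fun _ => Finset S) M.R
            (fun _ Ri => Ri.filter (fun r => mlp Ri r ≤ (M.cap : ℕ∞))) i) →
      ¬ ∃ σ : Strat S A, AllSafe M σ t M.cap :=
  stmt15_general M hdec mlp hmlp
end
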